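/- arXiv:2310.00762 — 6 statements merged into one kernel-verified Lean document; each statement's English description precedes it below -/
import Mathlib

section
/- Let G be a finite abelian group, let π : G → U(d) be a unitary representation of G on ℂ^d, and let M₀ ∈ M_d(ℂ) be such that the subspace 𝒱_{M₀} := span_ℂ{π(g) M₀ π(g)* : g ∈ G} contains the identity matrix and is closed under adjoints. Let P ∈ M_d(ℂ) be an orthogonal projection of rank at least 2 such that for every g ∈ G there is a scalar λ(g) ∈ ℂ with π(g) P = λ(g) • P (i.e., P is a product over g ∈ G of spectral projections of the commuting unitaries π(g)). Then P is an anticlique for 𝒱_{M₀}: for every g ∈ G there exists c(g) ∈ ℂ such that P (π(g) M₀ π(g)*) P = c(g) • P; equivalently, dim(P 𝒱_{M₀} P) = 1. -/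
open Matrix

/-- For a finite abelian group `G` with a unitary representation
`π : G → U(d)` on `ℂ^d` and `M₀ ∈ M_d(ℂ)` such that
`𝒱_{M₀} = span{π(g) M₀ π(g)* : g ∈ G}` contains the identity and is closed under
adjoints, any orthogonal projection `P` of rank at least `2` which is a common
spectral projection of the commuting unitaries `π(g)` (i.e. `π(g) P = λ(g) • P`
for every `g`) is an anticlique for `𝒱_{M₀}`. -/
theorem statement0 {G : Type*} [CommGroup G] [Fintype G] {d : ℕ}
    (π : G →* Matrix.unitaryGroup (Fin d) ℂ)
    (M₀ : Matrix (Fin d) (Fin d) ℂ)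
    (V : Submodule ℂ (Matrix (Fin d) (Fin d) ℂ))
    (hV : V = Submodule.span ℂ
      {A | ∃ g : G, A = (π g : Matrix (Fin d) (Fin d) ℂ) * M₀ *
        ((π g : Matrix (Fin d) (Fin d) ℂ))ᴴ})
    (hI : (1 : Matrix (Fin d) (Fin d) ℂ) ∈ V)
    (hstar : ∀ A ∈ V, Aᴴ ∈ V)
    (P : Matrix (Fin d) (Fin d) ℂ)
    (hPadj : Pᴴ = P) (hPidem : P * P = P)
    (hrank : 2 ≤ P.rank)
    (heig : ∀ g : G, ∃ lam : ℂ, (π g : Matrix (Fin d) (Fin d) ℂ) * P = lam • P) :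
    ∀ g : G, ∃ c : ℂ,
      P * ((π g : Matrix (Fin d) (Fin d) ℂ) * M₀ *
        ((π g : Matrix (Fin d) (Fin d) ℂ))ᴴ) * P = c • P := by
  classical
  have hP0 : P ≠ 0 := by
    intro h
    rw [h] at hrank
    simp [Matrix.rank_zero] at hrank
  -- key: each compression is a nonzero multiple of P M₀ P
  have key : ∀ g : G, ∃ mu : ℂ, mu ≠ 0 ∧
      P * ((π g : Matrix (Fin d) (Fin d) ℂ) * M₀ *
        ((π g : Matrix (Fin d) (Fin d) ℂ))ᴴ) * P = mu • (P * M₀ * P) := by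
    intro g
    obtain ⟨lam, hlam⟩ := heig g
    set U : Matrix (Fin d) (Fin d) ℂ := (π g : Matrix (Fin d) (Fin d) ℂ) with hU
    have hUstar : Uᴴ * U = 1 := by
      have := Matrix.UnitaryGroup.star_mul_self (π g)
      simpa [Matrix.star_eq_conjTranspose] using this
    have hPeq : P = lam • (Uᴴ * P) := by
      calc P = (Uᴴ * U) * P := by rw [hUstar, one_mul]
        _ = Uᴴ * (U * P) := by rw [mul_assoc]
        _ = Uᴴ * (lam • P) := by rw [hlam]
        _ = lam • (Uᴴ * P) := by rw [mul_smul_comm]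
    have hlam0 : lam ≠ 0 := by
      intro h
      rw [h, zero_smul] at hPeq
      exact hP0 hPeq
    have hright : Uᴴ * P = lam⁻¹ • P := by
      calc Uᴴ * P = lam⁻¹ • (lam • (Uᴴ * P)) := by
            rw [smul_smul, inv_mul_cancel₀ hlam0, one_smul]
        _ = lam⁻¹ • P := by rw [← hPeq]
    have hleft : P * U = (starRingEnd ℂ) lam⁻¹ • P := by
      have := congrArg Matrix.conjTranspose hright
      simpa [Matrix.conjTranspose_mul, Matrix.conjTranspose_smul, hPadj] using this
    have hc0 : (starRingEnd ℂ) lam⁻¹ ≠ 0 := by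
      rw [starRingEnd_apply]
      exact star_ne_zero.mpr (inv_ne_zero hlam0)
    refine ⟨(starRingEnd ℂ) lam⁻¹ * lam⁻¹, mul_ne_zero hc0 (inv_ne_zero hlam0), ?_⟩
    calc P * (U * M₀ * Uᴴ) * P = (P * U) * M₀ * (Uᴴ * P) := by
          rw [← mul_assoc, ← mul_assoc, mul_assoc (P * U * M₀)]
      _ = ((starRingEnd ℂ) lam⁻¹ • P) * M₀ * (lam⁻¹ • P) := by rw [hleft, hright]
      _ = ((starRingEnd ℂ) lam⁻¹ * lam⁻¹) • (P * M₀ * P) := by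
          rw [smul_mul_assoc, smul_mul_assoc, mul_smul_comm, smul_smul, mul_comm]
  -- use identity in V to get P = μ • P M₀ P with μ ≠ 0
  subst hV
  obtain ⟨n, f, A, hsum⟩ := Submodule.mem_span_set'.mp hI
  choose mu hmu0 hmu using fun i => key ((A i).2.choose)
  have hAval : ∀ i, ((A i : Matrix (Fin d) (Fin d) ℂ)) =
      (π ((A i).2.choose) : Matrix (Fin d) (Fin d) ℂ) * M₀ *
        ((π ((A i).2.choose) : Matrix (Fin d) (Fin d) ℂ))ᴴ := fun i => (A i).2.choose_spec
  have hPsum : P = (∑ i, f i * mu i) • (P * M₀ * P) := by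
    calc P = P * 1 * P := by rw [mul_one, hPidem]
      _ = P * (∑ i, f i • (A i : Matrix (Fin d) (Fin d) ℂ)) * P := by rw [hsum]
      _ = ∑ i, f i • (P * (A i : Matrix (Fin d) (Fin d) ℂ) * P) := by
          rw [Matrix.mul_sum, Matrix.sum_mul]
          exact Finset.sum_congr rfl fun i _ => by
            rw [mul_smul_comm, smul_mul_assoc]
      _ = ∑ i, (f i * mu i) • (P * M₀ * P) := by
          exact Finset.sum_congr rfl fun i _ => by
            rw [hAval i, hmu i, smul_smul]
      _ = (∑ i, f i * mu i) • (P * M₀ * P) := by rw [Finset.sum_smul]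
  set μ : ℂ := ∑ i, f i * mu i with hμ
  have hμ0 : μ ≠ 0 := by
    intro h
    rw [h, zero_smul] at hPsum
    exact hP0 hPsum
  have hPMP : P * M₀ * P = μ⁻¹ • P := by
    calc P * M₀ * P = μ⁻¹ • (μ • (P * M₀ * P)) := by
          rw [smul_smul, inv_mul_cancel₀ hμ0, one_smul]
      _ = μ⁻¹ • P := by rw [← hPsum]
  intro g
  obtain ⟨c, _, hc⟩ := key g
  exact ⟨c * μ⁻¹, by rw [hc, hPMP, smul_smul]⟩
end

section
/- Let X = !![0,1;1,0], Y = !![0,i;-i,0], Z = !![1,0;0,-1] be the 2×2 Pauli matrices and I₂ the 2×2 identity. For M₀ ∈ M₂(ℂ), the subspace 𝒱_{M₀} := span_ℂ{M₀, X M₀ X} contains I₂ and is closed under adjoints if and only if M₀ = c₀ I₂ + c₁ Y + c₂ Z for scalars c₀, c₁, c₂ ∈ ℂ with c₀ ≠ 0 and such that there exists c ∈ ℂ with c₁ = c·conj(c₁) and c₂ = c·conj(c₂). -/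
open Matrix

/-- The Pauli X matrix. -/
noncomputable def pauliX : Matrix (Fin 2) (Fin 2) ℂ := !![0, 1; 1, 0]
/-- The Pauli Y matrix. -/
noncomputable def pauliY : Matrix (Fin 2) (Fin 2) ℂ := !![0, Complex.I; -Complex.I, 0]
/-- The Pauli Z matrix. -/
noncomputable def pauliZ : Matrix (Fin 2) (Fin 2) ℂ := !![1, 0; 0, -1]

/-!
In the Pauli basis write `M₀ = P + Q` with `P ∈ span {I, X}` and `Q ∈ span {Y, Z}`. Conjugation
by `X` fixes `P` and negates `Q`, so `𝒱_{M₀} = span {P, Q}`. As `I, X, Y, Z` are linearly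
independent, `I ∈ span {P, Q}` forces `P` to be a nonzero multiple of `I`; then, `Y` and `Z`
being self-adjoint, `𝒱_{M₀}` is closed under adjoints exactly when
`Q* = conj c₁ • Y + conj c₂ • Z` is a multiple of `Q = c₁ • Y + c₂ • Z`.
-/

open Submodule ComplexConjugate

theorem Submodule.span_pair_add_sub {R M : Type*} [Ring R] [Invertible (2 : R)] [AddCommGroup M]
    [Module R M] (p q : M) : span R {p + q, p - q} = span R {p, q} := by
  have two_smul_eq (x : M) : (⅟2 : R) • (2 : R) • x = x := by
    rw [smul_smul, invOf_mul_self, one_smul]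
  refine le_antisymm (span_le.2 ?_) (span_le.2 ?_) <;>
    rintro x (rfl | rfl) <;> rw [SetLike.mem_coe, mem_span_pair]
  · exact ⟨1, 1, by simp⟩
  · exact ⟨1, -1, by simp [sub_eq_add_neg]⟩
  · refine ⟨⅟2, ⅟2, ?_⟩
    rw [← smul_add, add_add_sub_cancel, ← two_smul R, two_smul_eq]
  · refine ⟨⅟2, -⅟2, ?_⟩
    rw [neg_smul, ← sub_eq_add_neg, ← smul_sub, add_sub_sub_cancel, ← two_smul R, two_smul_eq]

theorem Submodule.forall_star_mem_span_iff {R M : Type*} [CommSemiring R] [StarRing R]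
    [AddCommMonoid M] [StarAddMonoid M] [Module R M] [StarModule R M] {s : Set M} :
    (∀ x ∈ span R s, star x ∈ span R s) ↔ ∀ x ∈ s, star x ∈ span R s := by
  refine ⟨fun h x hx ↦ h x (subset_span hx), fun h x hx ↦ ?_⟩
  induction hx using span_induction with
  | mem x hx => exact h x hx
  | zero => simp
  | add x y _ _ hx hy => simpa using add_mem hx hy
  | smul r x _ hx => simpa using smul_mem _ (star r) hx

def Submodule.IsOperatorSystem {A : Type*} [Semiring A] [StarRing A] [Module ℂ A]
    (V : Submodule ℂ A) : Prop :=
  1 ∈ V ∧ ∀ a ∈ V, star a ∈ V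

theorem pauliX_mul_pauliX : pauliX * pauliX = 1 := by
  ext i j; fin_cases i <;> fin_cases j <;> simp [pauliX]

theorem pauliX_mul_pauliY_mul_pauliX : pauliX * pauliY * pauliX = -pauliY := by
  ext i j; fin_cases i <;> fin_cases j <;> simp [pauliX, pauliY]

theorem pauliX_mul_pauliZ_mul_pauliX : pauliX * pauliZ * pauliX = -pauliZ := by
  ext i j; fin_cases i <;> fin_cases j <;> simp [pauliX, pauliZ]

theorem star_pauliY : star pauliY = pauliY := by
  ext i j; fin_cases i <;> fin_cases j <;> simp [pauliY]

theorem star_pauliZ : star pauliZ = pauliZ := by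
  ext i j; fin_cases i <;> fin_cases j <;> simp [pauliZ]

theorem pauli_expansion_eq (a b c d : ℂ) :
    a • 1 + b • pauliX + (c • pauliY + d • pauliZ) =
      !![a + d, b + c * Complex.I; b - c * Complex.I, a - d] := by
  ext i j; fin_cases i <;> fin_cases j <;> simp [pauliX, pauliY, pauliZ] <;> ring

theorem exists_pauli_expansion (M : Matrix (Fin 2) (Fin 2) ℂ) :
    ∃ a b c d : ℂ, M = a • 1 + b • pauliX + (c • pauliY + d • pauliZ) := by
  refine ⟨(M 0 0 + M 1 1) / 2, (M 0 1 + M 1 0) / 2, (M 0 1 - M 1 0) / (2 * Complex.I),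
    (M 0 0 - M 1 1) / 2, ?_⟩
  rw [pauli_expansion_eq]
  ext i j; fin_cases i <;> fin_cases j <;> simp <;> field_simp <;> ring

theorem pauli_expansion_inj {a b c d a' b' c' d' : ℂ}
    (h : a • 1 + b • pauliX + (c • pauliY + d • pauliZ) =
      a' • 1 + b' • pauliX + (c' • pauliY + d' • pauliZ)) :
    a = a' ∧ b = b' ∧ c = c' ∧ d = d' := by
  rw [pauli_expansion_eq, pauli_expansion_eq] at h
  have h₀₀ := congrFun₂ h 0 0
  have h₀₁ := congrFun₂ h 0 1
  have h₁₀ := congrFun₂ h 1 0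
  have h₁₁ := congrFun₂ h 1 1
  simp only [of_apply, cons_val', cons_val_zero, cons_val_one, empty_val', cons_val_fin_one]
    at h₀₀ h₀₁ h₁₀ h₁₁
  refine ⟨by linear_combination (h₀₀ + h₁₁) / 2, by linear_combination (h₀₁ + h₁₀) / 2,
    mul_right_cancel₀ Complex.I_ne_zero (by linear_combination (h₀₁ - h₁₀) / 2),
    by linear_combination (h₀₀ - h₁₁) / 2⟩

theorem pauliX_mul_smul_one_add_smul_pauliX_mul_pauliX (a b : ℂ) :
    pauliX * (a • 1 + b • pauliX) * pauliX = a • 1 + b • pauliX := by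
  simp only [mul_add, add_mul, mul_smul_comm, smul_mul_assoc, mul_one, pauliX_mul_pauliX, one_mul]

theorem pauliX_mul_smul_pauliY_add_smul_pauliZ_mul_pauliX (c d : ℂ) :
    pauliX * (c • pauliY + d • pauliZ) * pauliX = -(c • pauliY + d • pauliZ) := by
  simp only [mul_add, add_mul, mul_smul_comm, smul_mul_assoc, pauliX_mul_pauliY_mul_pauliX,
    pauliX_mul_pauliZ_mul_pauliX, smul_neg, neg_add]

theorem one_mem_span_pauli_iff (a b c d : ℂ) :
    (1 : Matrix (Fin 2) (Fin 2) ℂ) ∈ span ℂ {a • 1 + b • pauliX, c • pauliY + d • pauliZ} ↔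
      a ≠ 0 ∧ b = 0 := by
  rw [mem_span_pair]
  constructor
  · rintro ⟨α, β, h⟩
    have h' : (α * a) • 1 + (α * b) • pauliX + ((β * c) • pauliY + (β * d) • pauliZ) =
        (1 : ℂ) • 1 + (0 : ℂ) • pauliX + ((0 : ℂ) • pauliY + (0 : ℂ) • pauliZ) := by
      simpa [smul_add, smul_smul] using h
    obtain ⟨hαa, hαb, -, -⟩ := pauli_expansion_inj h'
    exact ⟨right_ne_zero_of_mul_eq_one hαa,
      (mul_eq_zero.1 hαb).resolve_left (left_ne_zero_of_mul_eq_one hαa)⟩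
  · rintro ⟨ha, rfl⟩
    exact ⟨a⁻¹, 0, by simp [smul_smul, ha]⟩

theorem star_mem_span_pauli_iff (a c d : ℂ) :
    star (c • pauliY + d • pauliZ) ∈ span ℂ {a • 1, c • pauliY + d • pauliZ} ↔
      ∃ γ, c = γ * conj c ∧ d = γ * conj d := by
  have hstar : star (c • pauliY + d • pauliZ) = conj c • pauliY + conj d • pauliZ := by
    simp [star_pauliY, star_pauliZ]
  rw [mem_span_pair, hstar]
  constructor
  · rintro ⟨α, β, h⟩
    have h' : (α * a) • 1 + (0 : ℂ) • pauliX + ((β * c) • pauliY + (β * d) • pauliZ) =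
        (0 : ℂ) • 1 + (0 : ℂ) • pauliX + (conj c • pauliY + conj d • pauliZ) := by
      simpa [smul_add, smul_smul] using h
    obtain ⟨-, -, hc, hd⟩ := pauli_expansion_inj h'
    refine ⟨conj β, ?_, ?_⟩
    · simpa using congrArg conj hc.symm
    · simpa using congrArg conj hd.symm
  · rintro ⟨γ, hc, hd⟩
    refine ⟨0, conj γ, ?_⟩
    conv_rhs => rw [hc, hd]
    simp [smul_add, smul_smul, mul_comm]

theorem isOperatorSystem_span_pauli_iff (a b c d : ℂ) :
    (span ℂ {a • 1 + b • pauliX, c • pauliY + d • pauliZ}).IsOperatorSystem ↔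
      a ≠ 0 ∧ b = 0 ∧ ∃ γ, c = γ * conj c ∧ d = γ * conj d := by
  simp only [IsOperatorSystem, forall_star_mem_span_iff, Set.forall_mem_insert,
    Set.mem_singleton_iff, forall_eq, one_mem_span_pauli_iff]
  constructor
  · rintro ⟨⟨ha, rfl⟩, -, hQ⟩
    rw [zero_smul, add_zero, star_mem_span_pauli_iff] at hQ
    exact ⟨ha, rfl, hQ⟩
  · rintro ⟨ha, rfl, hγ⟩
    rw [zero_smul, add_zero, star_mem_span_pauli_iff]
    refine ⟨⟨ha, rfl⟩, mem_span_pair.2 ⟨conj a / a, 0, ?_⟩, hγ⟩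
    simp [smul_smul, ha]

/-- For `M₀ ∈ M₂(ℂ)`, the subspace `𝒱_{M₀} = span{M₀, X M₀ X}` contains
`I₂` and is closed under adjoints iff `M₀ = c₀ I₂ + c₁ Y + c₂ Z` with `c₀ ≠ 0` and
there is `c ∈ ℂ` with `c₁ = c·conj(c₁)` and `c₂ = c·conj(c₂)`. -/
theorem statement3 (M₀ : Matrix (Fin 2) (Fin 2) ℂ) :
    ((1 : Matrix (Fin 2) (Fin 2) ℂ) ∈
        Submodule.span ℂ ({M₀, pauliX * M₀ * pauliX} : Set (Matrix (Fin 2) (Fin 2) ℂ)) ∧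
      ∀ A ∈ Submodule.span ℂ ({M₀, pauliX * M₀ * pauliX} : Set (Matrix (Fin 2) (Fin 2) ℂ)),
        Aᴴ ∈ Submodule.span ℂ ({M₀, pauliX * M₀ * pauliX} : Set (Matrix (Fin 2) (Fin 2) ℂ))) ↔
    ∃ c₀ c₁ c₂ : ℂ, c₀ ≠ 0 ∧
      (∃ c : ℂ, c₁ = c * (starRingEnd ℂ) c₁ ∧ c₂ = c * (starRingEnd ℂ) c₂) ∧
      M₀ = c₀ • (1 : Matrix (Fin 2) (Fin 2) ℂ) + c₁ • pauliY + c₂ • pauliZ := by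
  change (span ℂ {M₀, pauliX * M₀ * pauliX}).IsOperatorSystem ↔ _
  obtain ⟨a, b, c, d, rfl⟩ := exists_pauli_expansion M₀
  rw [mul_add, add_mul, pauliX_mul_smul_one_add_smul_pauliX_mul_pauliX,
    pauliX_mul_smul_pauliY_add_smul_pauliZ_mul_pauliX, ← sub_eq_add_neg, span_pair_add_sub,
    isOperatorSystem_span_pauli_iff]
  constructor
  · rintro ⟨ha, rfl, hγ⟩
    exact ⟨a, c, d, ha, hγ, by rw [zero_smul, add_zero, add_assoc]⟩
  · rintro ⟨c₀, c₁, c₂, hc₀, hγ, h⟩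
    obtain ⟨rfl, rfl, rfl, rfl⟩ := pauli_expansion_inj <| h.trans <|
      show _ = c₀ • 1 + (0 : ℂ) • pauliX + (c₁ • pauliY + c₂ • pauliZ) by
        rw [zero_smul, add_zero, add_assoc]
    exact ⟨hc₀, rfl, hγ⟩
end

section
/- Fix n ≥ 1 and 1 ≤ s ≤ n, let G = ⟨Z₁, …, Z_s⟩ ⊆ M_{2^n}(ℂ), and write M₀ = ∑_{j₁,…,jₙ = 0}^{3} α_{j₁⋯jₙ} σ_{j₁} ⊗ ⋯ ⊗ σ_{jₙ}. If the identity matrix I_{2^n} lies in span_ℂ{g M₀ g : g ∈ G}, then α_{0⋯0} ≠ 0 and α_{j₁⋯jₙ} = 0 for every index with j₁, …, j_s ∈ {0,1} and (j₁, …, j_s) ≠ (0, …, 0); that is, M₀ = α_{0⋯0} I₂^{⊗n} + ∑_{(j₁,…,jₙ): ∃ 1 ≤ r ≤ s, j_r ∈ {2,3}} α_{j₁⋯jₙ} σ_{j₁} ⊗ ⋯ ⊗ σ_{jₙ}. -/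
open Matrix

/-- The four Pauli matrices: `σ₀ = I₂`, `σ₁ = Z`, `σ₂ = X`, `σ₃ = Y`. -/
noncomputable def pauli : Fin 4 → Matrix (Fin 2) (Fin 2) ℂ
  | 0 => 1
  | 1 => !![1, 0; 0, -1]
  | 2 => !![0, 1; 1, 0]
  | 3 => !![0, Complex.I; -Complex.I, 0]

/-- The Pauli word `σ_{j₁} ⊗ ⋯ ⊗ σ_{jₙ} ∈ M_{2^n}(ℂ)`, as a matrix indexed by
`{0,1}^n`, with entry `∏ i, (σ_{j i}) (a i) (b i)`. -/
noncomputable def pauliWord {n : ℕ} (j : Fin n → Fin 4) :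
    Matrix (Fin n → Fin 2) (Fin n → Fin 2) ℂ :=
  Matrix.of fun a b => ∏ i, pauli (j i) (a i) (b i)

/-- `Z_r`: the Pauli word with `Z` in the `r`-th position and `I₂` elsewhere. -/
noncomputable def Zword {n : ℕ} (r : Fin n) :
    Matrix (Fin n → Fin 2) (Fin n → Fin 2) ℂ :=
  pauliWord (fun i => if i = r then 1 else 0)

/-- The subgroup (as a multiplicative submonoid: the generators are involutions,
so the generated submonoid is the generated subgroup) `⟨Z₁, …, Z_s⟩` of `M_{2^n}(ℂ)`. -/
noncomputable def ZSubgroup (n s : ℕ) :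
    Submonoid (Matrix (Fin n → Fin 2) (Fin n → Fin 2) ℂ) :=
  Submonoid.closure {A | ∃ r : Fin n, (r : ℕ) < s ∧ A = Zword r}

/-- The Pauli group `𝒫_n` on `n` qubits, as a set of matrices. -/
noncomputable def pauliGroupSet (n : ℕ) :
    Set (Matrix (Fin n → Fin 2) (Fin n → Fin 2) ℂ) :=
  {A | ∃ c ∈ ({1, -1, Complex.I, -Complex.I} : Set ℂ),
    ∃ j : Fin n → Fin 4, A = c • pauliWord j}

lemma pauli_diag (p : Fin 4) (hp : (p : ℕ) ≤ 1) (x y : Fin 2) (hxy : x ≠ y) :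
    pauli p x y = 0 := by
  fin_cases p <;> fin_cases x <;> fin_cases y <;> simp_all [pauli]

def sgn (b : Bool) (x : Fin 2) : ℂ := if b = true ∧ x = 1 then -1 else 1

lemma sgn_mul (b b' : Bool) (x : Fin 2) : sgn (xor b b') x = sgn b x * sgn b' x := by
  cases b <;> cases b' <;> fin_cases x <;> simp [sgn]

noncomputable def dfun {n : ℕ} (e : Fin n → Bool) (a : Fin n → Fin 2) : ℂ :=
  ∏ i, sgn (e i) (a i)

lemma Zword_eq_diagonal {n : ℕ} (r : Fin n) :
    Zword r = Matrix.diagonal (dfun (fun i => decide (i = r))) := by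
  ext a b
  by_cases hab : a = b
  · subst hab
    simp only [Zword, pauliWord, Matrix.of_apply, Matrix.diagonal_apply_eq, dfun]
    refine Finset.prod_congr rfl fun i _ => ?_
    by_cases hir : i = r
    · subst hir
      rcases Fin.exists_fin_two.mp ⟨a i, rfl⟩ with h | h <;> rw [h] <;> simp [pauli, sgn]
    · simp [hir, pauli, sgn]
  · obtain ⟨i, hi⟩ := Function.ne_iff.mp hab
    rw [Matrix.diagonal_apply_ne _ hab]
    show (∏ i, pauli (if i = r then 1 else 0) (a i) (b i)) = 0
    refine Finset.prod_eq_zero (Finset.mem_univ i) ?_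
    refine pauli_diag _ ?_ _ _ hi
    by_cases hir : i = r <;> simp [hir]

lemma mem_ZSubgroup_struct {n s : ℕ} {g : Matrix (Fin n → Fin 2) (Fin n → Fin 2) ℂ}
    (hg : g ∈ ZSubgroup n s) :
    ∃ e : Fin n → Bool, (∀ i, e i = true → (i : ℕ) < s) ∧ g = Matrix.diagonal (dfun e) := by
  induction hg using Submonoid.closure_induction with
  | mem A hA =>
    obtain ⟨r, hr, rfl⟩ := hA
    exact ⟨fun i => decide (i = r), by intro i hi; simp at hi; subst hi; exact hr,
      Zword_eq_diagonal r⟩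
  | one =>
    refine ⟨fun _ => false, by simp, ?_⟩
    ext a b; by_cases hab : a = b
    · subst hab; simp [dfun, sgn]
    · simp [Matrix.one_apply_ne hab, Matrix.diagonal_apply_ne _ hab]
  | mul x y hx hy ihx ihy =>
    obtain ⟨e, he, rfl⟩ := ihx
    obtain ⟨e', he', rfl⟩ := ihy
    refine ⟨fun i => xor (e i) (e' i), ?_, ?_⟩
    · intro i hi
      cases h1 : e i
      · cases h2 : e' i
        · simp [h1, h2] at hi
        · exact he' i h2
      · exact he i h1
    · have hd : (dfun e * dfun e' : (Fin n → Fin 2) → ℂ)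
          = dfun (fun i => xor (e i) (e' i)) := by
        funext a
        simp only [Pi.mul_apply, dfun, ← Finset.prod_mul_distrib]
        exact Finset.prod_congr rfl fun i _ => (sgn_mul _ _ _).symm
      rw [Matrix.diagonal_mul_diagonal]
      exact congrArg Matrix.diagonal (funext fun a => congrFun hd a)

lemma sgn_pair (b : Bool) (p : Fin 4) (x y : Fin 2) (h : pauli p x y ≠ 0) :
    sgn b x * sgn b y = if b = true ∧ 2 ≤ (p : ℕ) then -1 else 1 := by
  cases b <;> fin_cases p <;> fin_cases x <;> fin_cases y <;> simp_all [pauli, sgn]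

lemma conj_pauliWord {n : ℕ} (e : Fin n → Bool) (j : Fin n → Fin 4) :
    Matrix.diagonal (dfun e) * pauliWord j * Matrix.diagonal (dfun e)
      = (∏ i, if e i = true ∧ 2 ≤ (j i : ℕ) then (-1 : ℂ) else 1) • pauliWord j := by
  ext a b
  rw [Matrix.mul_diagonal, Matrix.diagonal_mul, Matrix.smul_apply]
  by_cases h : pauliWord j a b = 0
  · rw [h]; ring_nf
  · have hne : ∀ i : Fin n, pauli (j i) (a i) (b i) ≠ 0 := by
      intro i hi
      exact h (Finset.prod_eq_zero (Finset.mem_univ i) hi)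
    have key : dfun e a * dfun e b
        = ∏ i, if e i = true ∧ 2 ≤ (j i : ℕ) then (-1 : ℂ) else 1 := by
      rw [dfun, dfun, ← Finset.prod_mul_distrib]
      exact Finset.prod_congr rfl fun i _ => sgn_pair _ _ _ _ (hne i)
    rw [smul_eq_mul, ← key]; ring

lemma conj_pauliWord_good {n s : ℕ} (e : Fin n → Bool) (he : ∀ i, e i = true → (i : ℕ) < s)
    (j : Fin n → Fin 4) (hj : ∀ r : Fin n, (r : ℕ) < s → (j r : ℕ) ≤ 1) :
    Matrix.diagonal (dfun e) * pauliWord j * Matrix.diagonal (dfun e) = pauliWord j := by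
  rw [conj_pauliWord]
  have : (∏ i, if e i = true ∧ 2 ≤ (j i : ℕ) then (-1 : ℂ) else 1) = 1 := by
    refine Finset.prod_eq_one fun i _ => ?_
    rw [if_neg]
    rintro ⟨h1, h2⟩
    exact absurd (hj i (he i h1)) (by omega)
  rw [this, one_smul]

lemma pauli_orth (p q : Fin 4) :
    ∑ x : Fin 2, ∑ y : Fin 2, (starRingEnd ℂ) (pauli p x y) * pauli q x y
      = if p = q then 2 else 0 := by
  fin_cases p <;> fin_cases q <;>
    simp [pauli, Fin.sum_univ_two, Complex.ext_iff] <;> norm_num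

noncomputable def coeffL {n : ℕ} (k : Fin n → Fin 4) :
    Matrix (Fin n → Fin 2) (Fin n → Fin 2) ℂ →ₗ[ℂ] ℂ where
  toFun M := ∑ a, ∑ b, (starRingEnd ℂ) (pauliWord k a b) * M a b
  map_add' M N := by
    simp [Matrix.add_apply, mul_add, Finset.sum_add_distrib]
  map_smul' c M := by
    simp only [Matrix.smul_apply, smul_eq_mul, RingHom.id_apply, Finset.mul_sum]
    refine Finset.sum_congr rfl fun a _ => Finset.sum_congr rfl fun b _ => by ring

lemma sum_sum_prod {n : ℕ} (F : Fin n → Fin 2 → Fin 2 → ℂ) :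
    ∑ a : Fin n → Fin 2, ∑ b : Fin n → Fin 2, ∏ i, F i (a i) (b i)
      = ∏ i, ∑ x : Fin 2, ∑ y : Fin 2, F i x y := by
  have h1 : ∀ a : Fin n → Fin 2,
      ∑ b : Fin n → Fin 2, ∏ i, F i (a i) (b i) = ∏ i, ∑ y : Fin 2, F i (a i) y := by
    intro a
    have := Finset.sum_prod_piFinset (Finset.univ : Finset (Fin 2))
      (fun i c => F i (a i) c)
    rwa [Fintype.piFinset_univ] at this
  simp_rw [h1]
  have h2 := Finset.sum_prod_piFinset (Finset.univ : Finset (Fin 2))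
    (fun i c => ∑ y : Fin 2, F i c y)
  rwa [Fintype.piFinset_univ] at h2

lemma coeffL_pauliWord {n : ℕ} (k j : Fin n → Fin 4) :
    coeffL k (pauliWord j) = if j = k then (2 ^ n : ℂ) else 0 := by
  have : coeffL k (pauliWord j)
      = ∑ a : Fin n → Fin 2, ∑ b : Fin n → Fin 2,
          ∏ i, (starRingEnd ℂ) (pauli (k i) (a i) (b i)) * pauli (j i) (a i) (b i) := by
    simp only [coeffL, LinearMap.coe_mk, AddHom.coe_mk, pauliWord, Matrix.of_apply,
      map_prod, Finset.prod_mul_distrib]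
  rw [this, sum_sum_prod (fun i x y => (starRingEnd ℂ) (pauli (k i) x y) * pauli (j i) x y)]
  by_cases hjk : j = k
  · subst hjk
    rw [if_pos rfl, Finset.prod_congr rfl fun i _ => pauli_orth (j i) (j i)]
    simp
  · rw [if_neg hjk]
    obtain ⟨i, hi⟩ := Function.ne_iff.mp hjk
    refine Finset.prod_eq_zero (Finset.mem_univ i) ?_
    rw [pauli_orth, if_neg (fun h => hi h.symm)]

lemma pauliWord_zero {n : ℕ} : pauliWord (fun _ : Fin n => 0) = 1 := by
  ext a b
  have hp : ∀ x y : Fin 2, pauli 0 x y = if x = y then 1 else 0 := by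
    intro x y; fin_cases x <;> fin_cases y <;> simp [pauli]
  simp only [pauliWord, Matrix.of_apply, hp]
  rw [Fintype.prod_boole]
  simp [Matrix.one_apply, funext_iff]

/-- if `I_{2^n} ∈ span{g M₀ g : g ∈ G}` for `G = ⟨Z₁, …, Z_s⟩` and
`M₀ = ∑_j α_j σ_{j₁} ⊗ ⋯ ⊗ σ_{jₙ}`, then `α_{0⋯0} ≠ 0` and `α_j = 0` for every
index with `j₁, …, j_s ∈ {0,1}` and `(j₁, …, j_s) ≠ 0`; that is,
`M₀ = α_{0⋯0} I₂^{⊗n} + ∑_{j : ∃ r ≤ s, j_r ∈ {2,3}} α_j σ_{j₁} ⊗ ⋯ ⊗ σ_{jₙ}`. -/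
theorem statement5 (n s : ℕ) (hn : 1 ≤ n) (hs : 1 ≤ s) (hsn : s ≤ n)
    (α : (Fin n → Fin 4) → ℂ)
    (M₀ : Matrix (Fin n → Fin 2) (Fin n → Fin 2) ℂ)
    (hM : M₀ = ∑ j : Fin n → Fin 4, α j • pauliWord j)
    (hI : (1 : Matrix (Fin n → Fin 2) (Fin n → Fin 2) ℂ) ∈
      Submodule.span ℂ {A | ∃ g ∈ ZSubgroup n s, A = g * M₀ * g}) :
    α (fun _ => 0) ≠ 0 ∧
      (∀ j : Fin n → Fin 4, (∀ r : Fin n, (r : ℕ) < s → (j r : ℕ) ≤ 1) →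
        (∃ r : Fin n, (r : ℕ) < s ∧ j r ≠ 0) → α j = 0) ∧
      M₀ = α (fun _ => 0) • (1 : Matrix (Fin n → Fin 2) (Fin n → Fin 2) ℂ) +
        ∑ j ∈ Finset.univ.filter
            (fun j : Fin n → Fin 4 => ∃ r : Fin n, (r : ℕ) < s ∧ 2 ≤ (j r : ℕ)),
          α j • pauliWord j := by
  have h2n : (2 : ℂ) ^ n ≠ 0 := pow_ne_zero _ two_ne_zero
  obtain ⟨m, c, v, hv⟩ := Submodule.mem_span_set'.mp hI
  have hkey : ∀ (k : Fin n → Fin 4), (∀ r : Fin n, (r : ℕ) < s → (k r : ℕ) ≤ 1) →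
      ∀ i : Fin m, coeffL k (v i : Matrix (Fin n → Fin 2) (Fin n → Fin 2) ℂ)
        = α k * 2 ^ n := by
    intro k hk i
    obtain ⟨g, hg, hgv⟩ := (v i).2
    obtain ⟨e, he, rfl⟩ := mem_ZSubgroup_struct hg
    have expand : Matrix.diagonal (dfun e) * M₀ * Matrix.diagonal (dfun e)
        = ∑ j : Fin n → Fin 4,
            α j • (Matrix.diagonal (dfun e) * pauliWord j * Matrix.diagonal (dfun e)) := by
      rw [hM, Matrix.mul_sum, Matrix.sum_mul]
      refine Finset.sum_congr rfl fun j _ => ?_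
      rw [mul_smul_comm, smul_mul_assoc]
    rw [hgv, expand, map_sum]
    rw [Finset.sum_eq_single k]
    · rw [_root_.map_smul, conj_pauliWord_good e he k hk, coeffL_pauliWord, if_pos rfl, smul_eq_mul]
    · intro j _ hjk
      rw [_root_.map_smul, conj_pauliWord, _root_.map_smul, coeffL_pauliWord, if_neg hjk]
      simp
    · intro h; exact absurd (Finset.mem_univ k) h
  have hL1 : ∀ k : Fin n → Fin 4, (∀ r : Fin n, (r : ℕ) < s → (k r : ℕ) ≤ 1) →
      coeffL k (1 : Matrix (Fin n → Fin 2) (Fin n → Fin 2) ℂ)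
        = (∑ i, c i) * (α k * 2 ^ n) := by
    intro k hk
    rw [← hv, map_sum]
    simp_rw [_root_.map_smul, hkey k hk, smul_eq_mul]
    rw [← Finset.sum_mul]
  have hc1 : coeffL (fun _ => 0 : Fin n → Fin 4) (1 : Matrix (Fin n → Fin 2) (Fin n → Fin 2) ℂ)
      = 2 ^ n := by
    rw [← pauliWord_zero, coeffL_pauliWord, if_pos rfl]
  have h0 := hL1 (fun _ => 0) (by intro r _; simp)
  rw [hc1] at h0
  have hTα : (∑ i, c i) * α (fun _ => 0) = 1 := by
    apply mul_right_cancel₀ h2n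
    rw [one_mul, mul_assoc]
    exact h0.symm
  have hα0 : α (fun _ => 0) ≠ 0 := by
    intro h; rw [h, mul_zero] at hTα; exact one_ne_zero hTα.symm
  have hT : (∑ i, c i) ≠ 0 := by
    intro h; rw [h, zero_mul] at hTα; exact one_ne_zero hTα.symm
  have hzero : ∀ k : Fin n → Fin 4, (∀ r : Fin n, (r : ℕ) < s → (k r : ℕ) ≤ 1) →
      k ≠ (fun _ => 0) → α k = 0 := by
    intro k hk hk0
    have h1 := hL1 k hk
    have hc0 : coeffL k (1 : Matrix (Fin n → Fin 2) (Fin n → Fin 2) ℂ) = 0 := by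
      rw [← pauliWord_zero, coeffL_pauliWord, if_neg (fun h => hk0 h.symm)]
    rw [hc0] at h1
    rcases mul_eq_zero.mp h1.symm with h | h
    · exact absurd h hT
    · rcases mul_eq_zero.mp h with h' | h'
      · exact h'
      · exact absurd h' h2n
  refine ⟨hα0, fun j hj ⟨r, hr, hjr⟩ => hzero j hj (fun h => hjr (by rw [h])), ?_⟩
  rw [hM, ← Finset.sum_filter_add_sum_filter_not Finset.univ
    (fun j : Fin n → Fin 4 => ∃ r : Fin n, (r : ℕ) < s ∧ 2 ≤ (j r : ℕ)), add_comm]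
  congr 1
  rw [Finset.sum_eq_single (fun _ => 0 : Fin n → Fin 4)]
  · rw [pauliWord_zero]
  · intro j hjmem hjne
    simp only [Finset.mem_filter] at hjmem
    have hj : ∀ r : Fin n, (r : ℕ) < s → (j r : ℕ) ≤ 1 := by
      intro r hr
      by_contra h
      exact hjmem.2 ⟨r, hr, by omega⟩
    rw [hzero j hj hjne, zero_smul]
  · intro h
    refine absurd (Finset.mem_filter.mpr ⟨Finset.mem_univ _, ?_⟩) h
    rintro ⟨r, hr, h2⟩
    simp at h2
end

section
/- Fix n ≥ 1 and 1 ≤ s ≤ n, let G = ⟨Z₁, …, Z_s⟩ ⊆ M_{2^n}(ℂ), and suppose M₀ = α_{0⋯0} I₂^{⊗n} + ∑_{(j₁,…,jₙ): ∃ 1 ≤ r ≤ s, j_r ∈ {2,3}} α_{j₁⋯jₙ} σ_{j₁} ⊗ ⋯ ⊗ σ_{jₙ} with α_{0⋯0} ≠ 0. For each u = (u₁, …, u_s) ∈ {0,1}^s with u ≠ 0, set A_u := ∑_{j_r ∈ ℐ_{u_r}, 1 ≤ r ≤ s} ∑_{j_{s+1},…,jₙ = 0}^{3} α_{j₁⋯jₙ}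 σ_{j₁} ⊗ ⋯ ⊗ σ_{jₙ}. Then span_ℂ{g M₀ g : g ∈ G} = span_ℂ({I₂^{⊗n}} ∪ {A_u : u ∈ {0,1}^s, u ≠ 0}). -/
open Matrix

namespace S6aux

lemma fin2_cases (x : Fin 2) : x = 0 ∨ x = 1 := by omega

noncomputable def word {n : ℕ} (f : Fin n → Matrix (Fin 2) (Fin 2) ℂ) :
    Matrix (Fin n → Fin 2) (Fin n → Fin 2) ℂ :=
  Matrix.of fun a b => ∏ i, f i (a i) (b i)

lemma pauliWord_eq_word {n : ℕ} (j : Fin n → Fin 4) :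
    pauliWord j = word (fun i => pauli (j i)) := rfl

lemma word_mul {n : ℕ} (f g : Fin n → Matrix (Fin 2) (Fin 2) ℂ) :
    word f * word g = word (fun i => f i * g i) := by
  ext a b
  rw [Matrix.mul_apply]
  simp only [word, Matrix.of_apply]
  calc ∑ c : Fin n → Fin 2, (∏ i, f i (a i) (c i)) * ∏ i, g i (c i) (b i)
      = ∑ c : Fin n → Fin 2, ∏ i, f i (a i) (c i) * g i (c i) (b i) :=
        Finset.sum_congr rfl fun c _ => (Finset.prod_mul_distrib).symm
    _ = ∏ i, ∑ c : Fin 2, f i (a i) c * g i c (b i) := by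
        rw [Finset.prod_univ_sum]
        rw [Fintype.piFinset_univ]
    _ = ∏ i, (f i * g i) (a i) (b i) :=
        Finset.prod_congr rfl fun i _ => (Matrix.mul_apply).symm

lemma word_one {n : ℕ} : (word (fun _ => 1) : Matrix (Fin n → Fin 2) (Fin n → Fin 2) ℂ) = 1 := by
  ext a b
  show (∏ _i : Fin n, (1 : Matrix (Fin 2) (Fin 2) ℂ) (a _i) (b _i)) = (1 : Matrix _ _ ℂ) a b
  by_cases h : a = b
  · subst h; simp [Matrix.one_apply]
  · rw [Matrix.one_apply_ne h]
    obtain ⟨i, hi⟩ := Function.ne_iff.mp h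
    exact Finset.prod_eq_zero (Finset.mem_univ i) (Matrix.one_apply_ne hi)

lemma word_smul {n : ℕ} (c : Fin n → ℂ) (f : Fin n → Matrix (Fin 2) (Fin 2) ℂ) :
    word (fun i => c i • f i) = (∏ i, c i) • word f := by
  ext a b
  show (∏ i, (c i • f i) (a i) (b i)) = (∏ i, c i) * ∏ i, f i (a i) (b i)
  rw [← Finset.prod_mul_distrib]
  rfl

lemma pconj (k : Fin 4) :
    pauli 1 * pauli k * pauli 1 = (if 2 ≤ (k : ℕ) then (-1 : ℂ) else 1) • pauli k := by
  fin_cases k <;>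
    · ext i j
      fin_cases i <;> fin_cases j <;>
        simp [pauli, Matrix.mul_apply, Fin.sum_univ_two]

lemma Zsq : pauli 1 * pauli 1 = 1 := by
  ext i j
  fin_cases i <;> fin_cases j <;>
    simp [pauli, Matrix.mul_apply, Fin.sum_univ_two, Matrix.one_apply]

lemma word_congr {n : ℕ} {f g : Fin n → Matrix (Fin 2) (Fin 2) ℂ}
    (h : ∀ i, f i = g i) : word f = word g := congrArg word (funext h)

noncomputable def Zv {n : ℕ} (v : Fin n → Fin 2) :
    Matrix (Fin n → Fin 2) (Fin n → Fin 2) ℂ :=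
  word (fun i => if v i = 1 then pauli 1 else 1)

lemma Zv_congr {n : ℕ} {v w : Fin n → Fin 2} (h : v = w) : Zv v = Zv w := congrArg Zv h

lemma Zv_mul {n : ℕ} (v w : Fin n → Fin 2) : Zv v * Zv w = Zv (v + w) := by
  rw [Zv, Zv, Zv, word_mul]
  refine word_congr fun i => ?_
  rw [Pi.add_apply]
  rcases fin2_cases (v i) with hv | hv <;> rcases fin2_cases (w i) with hw | hw <;>
    rw [hv, hw] <;> simp [Zsq]

lemma Zv_zero {n : ℕ} : (Zv (0 : Fin n → Fin 2)) = 1 := by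
  rw [Zv, ← word_one]
  exact word_congr fun i => by simp

lemma add_self_zero {n : ℕ} (v : Fin n → Fin 2) : v + v = 0 := by
  funext i
  have h : ∀ x : Fin 2, x + x = 0 := by decide
  exact h (v i)

lemma Zv_sq {n : ℕ} (v : Fin n → Fin 2) : Zv v * Zv v = 1 := by
  rw [Zv_mul, add_self_zero, Zv_zero]

lemma Zword_eq {n : ℕ} (r : Fin n) :
    Zword r = Zv (fun i => if i = r then 1 else 0) := by
  rw [Zword, pauliWord_eq_word, Zv]
  refine word_congr fun i => ?_
  by_cases h : i = r
  · simp [h]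
  · simp only [h, if_false]
    rfl

lemma Zind_mem {n s : ℕ} (T : Finset (Fin n)) (hT : ∀ r ∈ T, (r : ℕ) < s) :
    Zv (fun i => if i ∈ T then (1 : Fin 2) else 0) ∈ ZSubgroup n s := by
  classical
  induction T using Finset.induction_on with
  | empty =>
    have h : Zv (fun i : Fin n => if i ∈ (∅ : Finset (Fin n)) then (1 : Fin 2) else 0) = 1 := by
      rw [← Zv_zero]; exact Zv_congr (by funext i; simp)
    rw [h]; exact Submonoid.one_mem _
  | @insert a T ha ih =>
    have key : Zv (fun i : Fin n => if i ∈ insert a T then (1 : Fin 2) else 0)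
        = Zv (fun i => if i = a then 1 else 0) * Zv (fun i => if i ∈ T then 1 else 0) := by
      rw [Zv_mul]
      refine Zv_congr ?_
      funext i
      rw [Pi.add_apply]
      by_cases h1 : i = a
      · subst h1
        simp [ha]
      · simp [h1, Finset.mem_insert]
    rw [key]
    refine Submonoid.mul_mem _
      (Submonoid.subset_closure ⟨a, hT a (Finset.mem_insert_self a T), (Zword_eq a).symm⟩)
      (ih fun r hr => hT r (Finset.mem_insert_of_mem hr))

lemma Zv_mem {n s : ℕ} (v : Fin n → Fin 2) (hv : ∀ i : Fin n, ¬ (i : ℕ) < s → v i = 0) :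
    Zv v ∈ ZSubgroup n s := by
  classical
  have hrep : Zv v = Zv (fun i => if i ∈ Finset.univ.filter (fun r => v r = 1) then 1 else 0) := by
    refine Zv_congr ?_
    funext i
    rcases fin2_cases (v i) with h | h <;> simp [h, Finset.mem_filter]
  rw [hrep]
  refine Zind_mem _ fun r hr => ?_
  have hone : v r = 1 := (Finset.mem_filter.mp hr).2
  by_contra h
  rw [hv r h] at hone
  exact absurd hone (by decide)

lemma mem_ZSubgroup {n s : ℕ} {g : Matrix (Fin n → Fin 2) (Fin n → Fin 2) ℂ}
    (hg : g ∈ ZSubgroup n s) :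
    ∃ v : Fin n → Fin 2, (∀ i : Fin n, ¬ (i : ℕ) < s → v i = 0) ∧ g = Zv v := by
  induction hg using Submonoid.closure_induction with
  | mem x hx =>
    obtain ⟨r, hr, rfl⟩ := hx
    exact ⟨fun i => if i = r then 1 else 0, fun i hi => by
      have hir : i ≠ r := fun h => hi (h ▸ hr)
      simp [hir], Zword_eq r⟩
  | one => exact ⟨0, fun _ _ => rfl, Zv_zero.symm⟩
  | mul x y hx hy ihx ihy =>
    obtain ⟨v, hv, rfl⟩ := ihx
    obtain ⟨w, hw, rfl⟩ := ihy
    exact ⟨v + w, fun i hi => by rw [Pi.add_apply, hv i hi, hw i hi]; rfl, Zv_mul v w⟩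

/-- the character `χ_u(v) = (-1)^{⟨v,u⟩}` -/
noncomputable def chi {n : ℕ} (v u : Fin n → Fin 2) : ℂ :=
  ∏ i, if v i = 1 ∧ u i = 1 then (-1 : ℂ) else 1

lemma chi_zero {n : ℕ} (v : Fin n → Fin 2) : chi v 0 = 1 := by
  rw [chi]
  refine Finset.prod_eq_one fun i _ => ?_
  simp

lemma chi_mul {n : ℕ} (v u w : Fin n → Fin 2) : chi v u * chi v w = chi v (u + w) := by
  rw [chi, chi, chi, ← Finset.prod_mul_distrib]
  refine Finset.prod_congr rfl fun i _ => ?_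
  rw [Pi.add_apply]
  rcases fin2_cases (v i) with h1 | h1 <;> rcases fin2_cases (u i) with h2 | h2 <;>
    rcases fin2_cases (w i) with h3 | h3 <;> rw [h1, h2, h3] <;>
      norm_num [show ((1 : Fin 2) + 1) = 0 from rfl, show ((0 : Fin 2) + 1) = 1 from rfl,
        show ((1 : Fin 2) + 0) = 1 from rfl, show ((0 : Fin 2) + 0) = 0 from rfl] <;>
      exact (if_neg (by decide)).symm

lemma chi_orth {n s : ℕ} (u : Fin n → Fin 2) (hu : ∀ i : Fin n, ¬ (i : ℕ) < s → u i = 0)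
    (hne : u ≠ 0) :
    ∑ v ∈ Finset.univ.filter
        (fun v : Fin n → Fin 2 => ∀ i : Fin n, ¬ (i : ℕ) < s → v i = 0), chi v u = 0 := by
  classical
  obtain ⟨r, hr⟩ : ∃ r, u r ≠ 0 := by
    by_contra h
    push_neg at h
    exact hne (funext h)
  have hur : u r = 1 := by
    rcases fin2_cases (u r) with h | h
    · exact absurd h hr
    · exact h
  have hrs : (r : ℕ) < s := by
    by_contra h
    exact hr (hu r h)
  have hflip : ∀ x : Fin 2, x + 1 ≠ x := by decide
  have key : ∀ v : Fin n → Fin 2, chi (Function.update v r (v r + 1)) u = - chi v u := by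
    intro v
    rw [chi, chi, ← Finset.mul_prod_erase _ _ (Finset.mem_univ r),
      ← Finset.mul_prod_erase _ _ (Finset.mem_univ r)]
    have hrest : (∏ i ∈ Finset.univ.erase r,
          if Function.update v r (v r + 1) i = 1 ∧ u i = 1 then (-1 : ℂ) else 1)
        = ∏ i ∈ Finset.univ.erase r, if v i = 1 ∧ u i = 1 then (-1 : ℂ) else 1 := by
      refine Finset.prod_congr rfl fun i hi => ?_
      rw [Function.update_of_ne (Finset.ne_of_mem_erase hi)]
    rw [hrest, Function.update_self, hur]
    rcases fin2_cases (v r) with h | h <;> rw [h] <;>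
      norm_num [show ((1 : Fin 2) + 1) = 0 from rfl, show ((0 : Fin 2) + 1) = 1 from rfl] <;>
      exact fun h => absurd h (by decide)
  refine Finset.sum_involution (fun v _ => Function.update v r (v r + 1)) ?_ ?_ ?_ ?_
  · intro v hv
    rw [key v]
    ring
  · intro v hv _
    intro hcontra
    have h := congrFun hcontra r
    rw [Function.update_self] at h
    exact hflip (v r) h
  · intro v hv
    rw [Finset.mem_filter] at hv ⊢
    refine ⟨Finset.mem_univ _, fun i hi => ?_⟩
    have hir : i ≠ r := fun h => hi (h ▸ hrs)
    rw [Function.update_of_ne hir]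
    exact hv.2 i hi
  · intro v hv
    funext i
    by_cases h : i = r
    · subst h
      rw [Function.update_self, Function.update_self]
      have h2 : ∀ x : Fin 2, x + 1 + 1 = x := by decide
      exact h2 (v i)
    · rw [Function.update_of_ne h, Function.update_of_ne h]

lemma conj_pauliWord {n : ℕ} (v : Fin n → Fin 2) (j : Fin n → Fin 4) :
    Zv v * pauliWord j * Zv v =
      (∏ i, if v i = 1 ∧ 2 ≤ ((j i) : ℕ) then (-1 : ℂ) else 1) • pauliWord j := by
  rw [pauliWord_eq_word, Zv, word_mul, word_mul]
  rw [word_congr (g := fun i => (if v i = 1 ∧ 2 ≤ ((j i) : ℕ) then (-1 : ℂ) else 1) • pauli (j i))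
    (fun i => ?_), word_smul]
  by_cases h : v i = 1
  · simp only [h, if_true, true_and]
    exact pconj (j i)
  · simp [h]

/-- projection of a word pattern to its `{0,1}^s` type -/
def proj (s : ℕ) {n : ℕ} (j : Fin n → Fin 4) : Fin n → Fin 2 := fun i =>
  if (i : ℕ) < s then ⟨(j i : ℕ) / 2, by have := (j i).isLt; omega⟩ else 0

lemma proj_val {n : ℕ} {s : ℕ} (j : Fin n → Fin 4) (i : Fin n) (hi : (i : ℕ) < s) :
    ((proj s j i : Fin 2) : ℕ) = (j i : ℕ) / 2 := by
  simp [proj, hi]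

lemma proj_supp {n : ℕ} {s : ℕ} (j : Fin n → Fin 4) (i : Fin n) (hi : ¬ (i : ℕ) < s) :
    proj s j i = 0 := by
  simp [proj, hi]

lemma heps {n s : ℕ} (v : Fin n → Fin 2) (hv : ∀ i : Fin n, ¬ (i : ℕ) < s → v i = 0)
    (j : Fin n → Fin 4) :
    (∏ i, if v i = 1 ∧ 2 ≤ ((j i) : ℕ) then (-1 : ℂ) else 1) = chi v (proj s j) := by
  rw [chi]
  refine Finset.prod_congr rfl fun i _ => ?_
  by_cases hi : (i : ℕ) < s
  · have hiff : (2 ≤ ((j i) : ℕ)) ↔ (proj s j i = 1) := by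
      rw [Fin.ext_iff, proj_val j i hi]
      have := (j i).isLt
      show 2 ≤ ((j i) : ℕ) ↔ (j i : ℕ) / 2 = 1
      omega
    exact if_congr (and_congr Iff.rfl hiff) rfl rfl
  · have hvi : v i = 0 := hv i hi
    rw [hvi, if_neg (fun h => absurd h.1 (by decide : ¬ (0 : Fin 2) = 1)),
      if_neg (fun h => absurd h.1 (by decide : ¬ (0 : Fin 2) = 1))]

lemma hfiber_eq {n s : ℕ} (u : Fin n → Fin 2) (hsupp : ∀ i : Fin n, ¬ (i : ℕ) < s → u i = 0)
    (hne : u ≠ 0) :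
    (Finset.univ.filter
        (fun j : Fin n → Fin 4 => ∀ r : Fin n, (r : ℕ) < s → (j r : ℕ) / 2 = (u r : ℕ)))
    = (Finset.univ.filter
        (fun j : Fin n → Fin 4 => ∃ r : Fin n, (r : ℕ) < s ∧ 2 ≤ (j r : ℕ))).filter
        (fun j => proj s j = u) := by
  obtain ⟨r₀, hr₀⟩ : ∃ r, u r ≠ 0 := by
    by_contra h
    push_neg at h
    exact hne (funext h)
  have hr₀s : (r₀ : ℕ) < s := by
    by_contra h
    exact hr₀ (hsupp r₀ h)
  have hur₀ : ((u r₀ : Fin 2) : ℕ) = 1 := by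
    rcases fin2_cases (u r₀) with h | h
    · exact absurd h hr₀
    · rw [h]; rfl
  ext j
  simp only [Finset.mem_filter, Finset.mem_univ, true_and]
  constructor
  · intro h
    refine ⟨⟨r₀, hr₀s, ?_⟩, ?_⟩
    · have h1 := h r₀ hr₀s
      have h2 := (j r₀).isLt
      omega
    · funext i
      by_cases hi : (i : ℕ) < s
      · exact Fin.ext (by rw [proj_val j i hi, h i hi])
      · rw [proj_supp j i hi, hsupp i hi]
  · rintro ⟨_, hp⟩ r hr
    rw [← hp, proj_val j r hr]

lemma hfiber_empty {n s : ℕ} (u : Fin n → Fin 2)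
    (hu : ¬ ((∀ i : Fin n, ¬ (i : ℕ) < s → u i = 0) ∧ u ≠ 0)) :
    (Finset.univ.filter
        (fun j : Fin n → Fin 4 => ∃ r : Fin n, (r : ℕ) < s ∧ 2 ≤ (j r : ℕ))).filter
        (fun j => proj s j = u) = ∅ := by
  rw [Finset.eq_empty_iff_forall_notMem]
  intro j hj
  simp only [Finset.mem_filter, Finset.mem_univ, true_and] at hj
  obtain ⟨⟨r, hrs, hjr⟩, hp⟩ := hj
  apply hu
  constructor
  · intro i hi
    rw [← hp, proj_supp j i hi]
  · intro h0
    have h1 : u r = 0 := by rw [h0]; rfl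
    have hval : ((u r : Fin 2) : ℕ) = 0 := by rw [h1]; rfl
    rw [← hp, proj_val j r hrs] at hval
    have := (j r).isLt
    omega

/-- The key conjugation identity. -/
lemma mainConj {n : ℕ} (s : ℕ) (α : (Fin n → Fin 4) → ℂ)
    (A : (Fin n → Fin 2) → Matrix (Fin n → Fin 2) (Fin n → Fin 2) ℂ)
    (hA : ∀ u : Fin n → Fin 2, A u = ∑ j ∈ Finset.univ.filter
        (fun j : Fin n → Fin 4 => ∀ r : Fin n, (r : ℕ) < s → (j r : ℕ) / 2 = (u r : ℕ)),
      α j • pauliWord j)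
    (v : Fin n → Fin 2) (hv : ∀ i : Fin n, ¬ (i : ℕ) < s → v i = 0) :
    Zv v * (α (fun _ => 0) • (1 : Matrix (Fin n → Fin 2) (Fin n → Fin 2) ℂ) +
      ∑ j ∈ Finset.univ.filter
          (fun j : Fin n → Fin 4 => ∃ r : Fin n, (r : ℕ) < s ∧ 2 ≤ (j r : ℕ)),
        α j • pauliWord j) * Zv v
    = α (fun _ => 0) • (1 : Matrix (Fin n → Fin 2) (Fin n → Fin 2) ℂ) +
      ∑ u ∈ (Finset.univ.filter
          (fun w : Fin n → Fin 2 => ∀ i : Fin n, ¬ (i : ℕ) < s → w i = 0)).filter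
          (fun u => u ≠ 0),
        chi v u • A u := by
  classical
  have hterm : ∀ j : Fin n → Fin 4,
      Zv v * (α j • pauliWord j) * Zv v = chi v (proj s j) • (α j • pauliWord j) := by
    intro j
    rw [mul_smul_comm, smul_mul_assoc, conj_pauliWord, heps v hv j, smul_comm]
  calc Zv v * (α (fun _ => 0) • (1 : Matrix (Fin n → Fin 2) (Fin n → Fin 2) ℂ) +
      ∑ j ∈ Finset.univ.filter
          (fun j : Fin n → Fin 4 => ∃ r : Fin n, (r : ℕ) < s ∧ 2 ≤ (j r : ℕ)),
        α j • pauliWord j) * Zv v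
      = α (fun _ => 0) • (Zv v * 1 * Zv v) +
        ∑ j ∈ Finset.univ.filter
            (fun j : Fin n → Fin 4 => ∃ r : Fin n, (r : ℕ) < s ∧ 2 ≤ (j r : ℕ)),
          Zv v * (α j • pauliWord j) * Zv v := by
        rw [mul_add, add_mul, mul_smul_comm, smul_mul_assoc, Finset.mul_sum, Finset.sum_mul]
    _ = α (fun _ => 0) • (1 : Matrix (Fin n → Fin 2) (Fin n → Fin 2) ℂ) +
        ∑ j ∈ Finset.univ.filter
            (fun j : Fin n → Fin 4 => ∃ r : Fin n, (r : ℕ) < s ∧ 2 ≤ (j r : ℕ)),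
          chi v (proj s j) • (α j • pauliWord j) := by
        rw [mul_one, Zv_sq]
        exact congrArg _ (Finset.sum_congr rfl fun j _ => hterm j)
    _ = α (fun _ => 0) • (1 : Matrix (Fin n → Fin 2) (Fin n → Fin 2) ℂ) +
        ∑ u : Fin n → Fin 2,
          ∑ j ∈ (Finset.univ.filter
              (fun j : Fin n → Fin 4 => ∃ r : Fin n, (r : ℕ) < s ∧ 2 ≤ (j r : ℕ))).filter
              (fun j => proj s j = u),
            chi v (proj s j) • (α j • pauliWord j) := by
        rw [Finset.sum_fiberwise_of_maps_to (fun j _ => Finset.mem_univ (proj s j))]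
    _ = α (fun _ => 0) • (1 : Matrix (Fin n → Fin 2) (Fin n → Fin 2) ℂ) +
        ∑ u : Fin n → Fin 2,
          chi v u • ∑ j ∈ (Finset.univ.filter
              (fun j : Fin n → Fin 4 => ∃ r : Fin n, (r : ℕ) < s ∧ 2 ≤ (j r : ℕ))).filter
              (fun j => proj s j = u),
            α j • pauliWord j := by
        congr 1
        refine Finset.sum_congr rfl fun u _ => ?_
        rw [Finset.smul_sum]
        refine Finset.sum_congr rfl fun j hj => ?_
        rw [(Finset.mem_filter.mp hj).2]
    _ = α (fun _ => 0) • (1 : Matrix (Fin n → Fin 2) (Fin n → Fin 2) ℂ) +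
        ∑ u ∈ (Finset.univ.filter
            (fun w : Fin n → Fin 2 => ∀ i : Fin n, ¬ (i : ℕ) < s → w i = 0)).filter
            (fun u => u ≠ 0),
          chi v u • A u := by
        congr 1
        rw [← Finset.sum_subset (Finset.subset_univ _) ?van]
        case van =>
          intro u _ hu
          have hu' : ¬ ((∀ i : Fin n, ¬ (i : ℕ) < s → u i = 0) ∧ u ≠ 0) := by
            intro h
            exact hu (Finset.mem_filter.mpr ⟨Finset.mem_filter.mpr ⟨Finset.mem_univ _, h.1⟩, h.2⟩)
          rw [hfiber_empty u hu', Finset.sum_empty, smul_zero]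
        refine Finset.sum_congr rfl fun u hu => ?_
        have hu2 := Finset.mem_filter.mp hu
        have hu3 := Finset.mem_filter.mp hu2.1
        rw [hA u, hfiber_eq u hu3.2 hu2.2]

end S6aux

/-- for `G = ⟨Z₁, …, Z_s⟩` and
`M₀ = α_{0⋯0} I₂^{⊗n} + ∑_{j : ∃ r ≤ s, j_r ∈ {2,3}} α_j σ_{j₁} ⊗ ⋯ ⊗ σ_{jₙ}`
with `α_{0⋯0} ≠ 0`, setting
`A_u = ∑_{j : j_r ∈ ℐ_{u_r}, 1 ≤ r ≤ s} α_j σ_{j₁} ⊗ ⋯ ⊗ σ_{jₙ}` for each nonzero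
`u ∈ {0,1}^s` (where `j_r ∈ ℐ_{u_r} ↔ (j_r : ℕ)/2 = u_r`), we have
`span{g M₀ g : g ∈ G} = span({I₂^{⊗n}} ∪ {A_u : u ≠ 0})`. -/
theorem statement6 (n s : ℕ) (hn : 1 ≤ n) (hs : 1 ≤ s) (hsn : s ≤ n)
    (α : (Fin n → Fin 4) → ℂ)
    (hα : α (fun _ => 0) ≠ 0)
    (M₀ : Matrix (Fin n → Fin 2) (Fin n → Fin 2) ℂ)
    (hM : M₀ = α (fun _ => 0) • (1 : Matrix (Fin n → Fin 2) (Fin n → Fin 2) ℂ) +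
      ∑ j ∈ Finset.univ.filter
          (fun j : Fin n → Fin 4 => ∃ r : Fin n, (r : ℕ) < s ∧ 2 ≤ (j r : ℕ)),
        α j • pauliWord j)
    (A : (Fin n → Fin 2) → Matrix (Fin n → Fin 2) (Fin n → Fin 2) ℂ)
    (hA : ∀ u : Fin n → Fin 2, A u = ∑ j ∈ Finset.univ.filter
        (fun j : Fin n → Fin 4 => ∀ r : Fin n, (r : ℕ) < s → (j r : ℕ) / 2 = (u r : ℕ)),
      α j • pauliWord j) :
    Submodule.span ℂ {x | ∃ g ∈ ZSubgroup n s, x = g * M₀ * g} =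
      Submodule.span ℂ ({(1 : Matrix (Fin n → Fin 2) (Fin n → Fin 2) ℂ)} ∪
        {x | ∃ u : Fin n → Fin 2, (∃ r : Fin n, (r : ℕ) < s ∧ u r ≠ 0) ∧ x = A u}) := by
  classical
  open S6aux in
  set Vfin : Finset (Fin n → Fin 2) := Finset.univ.filter
    (fun w : Fin n → Fin 2 => ∀ i : Fin n, ¬ (i : ℕ) < s → w i = 0) with hVfin
  set Cfin : Finset (Fin n → Fin 2) := Vfin.filter (fun u => u ≠ 0) with hCfin
  have hconj : ∀ v ∈ Vfin, Zv v * M₀ * Zv v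
      = α (fun _ => 0) • (1 : Matrix (Fin n → Fin 2) (Fin n → Fin 2) ℂ) +
        ∑ u ∈ Cfin, chi v u • A u := by
    intro v hv
    rw [hM]
    exact mainConj s α A hA v ((Finset.mem_filter.mp hv).2)
  have hmemL : ∀ v ∈ Vfin, Zv v * M₀ * Zv v ∈
      {x | ∃ g ∈ ZSubgroup n s, x = g * M₀ * g} := by
    intro v hv
    exact ⟨Zv v, Zv_mem v ((Finset.mem_filter.mp hv).2), rfl⟩
  have hcard : ((Vfin.card : ℂ)) ≠ 0 := by
    rw [Nat.cast_ne_zero]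
    exact Finset.card_ne_zero_of_mem
      (Finset.mem_filter.mpr ⟨Finset.mem_univ (0 : Fin n → Fin 2), fun _ _ => rfl⟩)
  refine le_antisymm (Submodule.span_le.mpr ?_) (Submodule.span_le.mpr ?_)
  · rintro x ⟨g, hg, rfl⟩
    obtain ⟨v, hv, rfl⟩ := mem_ZSubgroup hg
    have hvV : v ∈ Vfin := Finset.mem_filter.mpr ⟨Finset.mem_univ _, hv⟩
    rw [SetLike.mem_coe, hconj v hvV]
    refine Submodule.add_mem _
      (Submodule.smul_mem _ _ (Submodule.subset_span (Set.mem_union_left _ rfl))) ?_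
    refine Submodule.sum_mem _ fun u hu => Submodule.smul_mem _ _
      (Submodule.subset_span (Set.mem_union_right _ ?_))
    have hu2 := Finset.mem_filter.mp hu
    have hu3 := Finset.mem_filter.mp hu2.1
    obtain ⟨r, hr⟩ : ∃ r, u r ≠ 0 := by
      by_contra h
      push_neg at h
      exact hu2.2 (funext h)
    have hrs : (r : ℕ) < s := by
      by_contra h
      exact hr (hu3.2 r h)
    exact ⟨u, ⟨r, hrs, hr⟩, rfl⟩
  · rintro x (hx | hx)
    · rw [Set.mem_singleton_iff] at hx
      subst hx
      have hsum : ∑ v ∈ Vfin, (Zv v * M₀ * Zv v)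
          = Vfin.card • (α (fun _ => 0) • (1 : Matrix (Fin n → Fin 2) (Fin n → Fin 2) ℂ)) := by
        rw [Finset.sum_congr rfl hconj, Finset.sum_add_distrib, Finset.sum_const]
        have hz : ∑ v ∈ Vfin, ∑ u ∈ Cfin, chi v u • A u = 0 := by
          rw [Finset.sum_comm]
          refine Finset.sum_eq_zero fun u hu => ?_
          rw [← Finset.sum_smul]
          have hu2 := Finset.mem_filter.mp hu
          have hu3 := Finset.mem_filter.mp hu2.1
          rw [hVfin, chi_orth u hu3.2 hu2.2, zero_smul]
        rw [hz, add_zero]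
      have hone : (1 : Matrix (Fin n → Fin 2) (Fin n → Fin 2) ℂ)
          = ((Vfin.card : ℂ) * α (fun _ => 0))⁻¹ • ∑ v ∈ Vfin, (Zv v * M₀ * Zv v) := by
        rw [hsum, ← Nat.cast_smul_eq_nsmul ℂ, smul_smul, smul_smul, mul_assoc,
          inv_mul_cancel₀ (mul_ne_zero hcard hα), one_smul]
      rw [SetLike.mem_coe, hone]
      exact Submodule.smul_mem _ _ (Submodule.sum_mem _ fun v hv =>
        Submodule.subset_span (hmemL v hv))
    · obtain ⟨u, ⟨r, hrs, hur⟩, rfl⟩ := hx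
      set u' : Fin n → Fin 2 := fun i => if (i : ℕ) < s then u i else 0 with hu'def
      have hu'supp : ∀ i : Fin n, ¬ (i : ℕ) < s → u' i = 0 := by
        intro i hi
        rw [hu'def]
        simp [hi]
      have hu'ne : u' ≠ 0 := by
        intro h
        apply hur
        have := congrFun h r
        rw [hu'def] at this
        simpa [hrs] using this
      have hu'V : u' ∈ Vfin := Finset.mem_filter.mpr ⟨Finset.mem_univ _, hu'supp⟩
      have hu'C : u' ∈ Cfin := Finset.mem_filter.mpr ⟨hu'V, hu'ne⟩
      have hAuu' : A u = A u' := by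
        rw [hA u, hA u']
        refine Finset.sum_congr (Finset.filter_congr fun j _ => ?_) (fun _ _ => rfl)
        have hval : ∀ r' : Fin n, (r' : ℕ) < s → ((u' r' : Fin 2) : ℕ) = ((u r' : Fin 2) : ℕ) := by
          intro r' hr'
          rw [hu'def]
          simp [hr']
        constructor
        · intro h r' hr'
          rw [hval r' hr']
          exact h r' hr'
        · intro h r' hr'
          rw [← hval r' hr']
          exact h r' hr'
      have hsum2 : ∑ v ∈ Vfin, chi v u' • (Zv v * M₀ * Zv v) = (Vfin.card : ℂ) • A u' := by
        have hexp : ∀ v ∈ Vfin, chi v u' • (Zv v * M₀ * Zv v)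
            = (chi v u' * α (fun _ => 0)) • (1 : Matrix (Fin n → Fin 2) (Fin n → Fin 2) ℂ) +
              ∑ w ∈ Cfin, chi v (u' + w) • A w := by
          intro v hv
          rw [hconj v hv, smul_add, smul_smul, Finset.smul_sum]
          congr 1
          exact Finset.sum_congr rfl fun w _ => by rw [smul_smul, chi_mul]
        rw [Finset.sum_congr rfl hexp, Finset.sum_add_distrib, ← Finset.sum_smul,
          ← Finset.sum_mul]
        rw [show (∑ v ∈ Vfin, chi v u') = 0 from hVfin ▸ chi_orth u' hu'supp hu'ne,
          zero_mul, zero_smul, zero_add, Finset.sum_comm]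
        have hinner : ∀ w ∈ Cfin, (∑ v ∈ Vfin, chi v (u' + w) • A w)
            = if w = u' then (Vfin.card : ℂ) • A u' else 0 := by
          intro w hw
          rw [← Finset.sum_smul]
          by_cases hwu : w = u'
          · subst hwu
            rw [if_pos rfl, add_self_zero]
            have hc : ∀ v ∈ Vfin, chi v (0 : Fin n → Fin 2) = 1 := fun v _ => chi_zero v
            rw [Finset.sum_congr rfl hc, Finset.sum_const, nsmul_eq_mul, mul_one]
          · rw [if_neg hwu]
            have hw2 := Finset.mem_filter.mp hw
            have hw3 := Finset.mem_filter.mp hw2.1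
            have hne2 : u' + w ≠ 0 := by
              intro h
              apply hwu
              have h1 : w = -u' := eq_neg_of_add_eq_zero_right h
              have h2 : -u' = u' := neg_eq_of_add_eq_zero_right (add_self_zero u')
              rw [h1, h2]
            have hsupp2 : ∀ i : Fin n, ¬ (i : ℕ) < s → (u' + w) i = 0 := by
              intro i hi
              rw [Pi.add_apply, hu'supp i hi, hw3.2 i hi]
              rfl
            rw [hVfin, chi_orth (u' + w) hsupp2 hne2, zero_smul]
        rw [Finset.sum_congr rfl hinner, Finset.sum_ite_eq' Cfin u'
          (fun _ => (Vfin.card : ℂ) • A u'), if_pos hu'C]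
      have hfin : A u = (Vfin.card : ℂ)⁻¹ • ∑ v ∈ Vfin, chi v u' • (Zv v * M₀ * Zv v) := by
        rw [hsum2, smul_smul, inv_mul_cancel₀ hcard, one_smul, hAuu']
      rw [SetLike.mem_coe, hfin]
      exact Submodule.smul_mem _ _ (Submodule.sum_mem _ fun v hv =>
        Submodule.smul_mem _ _ (Submodule.subset_span (hmemL v hv)))
end

section
/- Fix n ≥ 1 and 1 ≤ s ≤ n. Let 𝒫_n = {c · σ_{j₁} ⊗ ⋯ ⊗ σ_{jₙ} : c ∈ {1,-1,i,-i}, j₁, …, jₙ ∈ {0,1,2,3}} be the Pauli group on n qubits and let G = ⟨Z₁, …, Z_s⟩ ⊆ 𝒫_n. Then the normalizer N(G) = {h ∈ 𝒫_n : h G h⁻¹ = G} is given by N(G) = {c · σ_{j₁} ⊗ ⋯ ⊗ σ_{jₙ} : j₁, …, j_s ∈ {0,1}, j_{s+1}, …, jₙ ∈ {0,1,2,3}, c ∈ {1,-1,i,-i}}. -/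
open Matrix

noncomputable def tensorWord {n : ℕ} (M : Fin n → Matrix (Fin 2) (Fin 2) ℂ) :
    Matrix (Fin n → Fin 2) (Fin n → Fin 2) ℂ :=
  Matrix.of fun a b => ∏ i, M i (a i) (b i)

lemma pauliWord_eq {n : ℕ} (j : Fin n → Fin 4) :
    pauliWord j = tensorWord fun i => pauli (j i) := rfl

lemma tensorWord_mul {n : ℕ} (M N : Fin n → Matrix (Fin 2) (Fin 2) ℂ) :
    tensorWord M * tensorWord N = tensorWord fun i => M i * N i := by
  ext a b
  simp only [tensorWord, Matrix.mul_apply, Matrix.of_apply]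
  rw [Finset.prod_univ_sum, Fintype.piFinset_univ]
  exact Finset.sum_congr rfl fun x _ => (Finset.prod_mul_distrib).symm

lemma tensorWord_smul {n : ℕ} (c : Fin n → ℂ) (M : Fin n → Matrix (Fin 2) (Fin 2) ℂ) :
    tensorWord (fun i => c i • M i) = (∏ i, c i) • tensorWord M := by
  ext a b
  simp [tensorWord, Finset.prod_mul_distrib]

lemma pauli_mul_self (m : Fin 4) : pauli m * pauli m = 1 := by
  fin_cases m <;>
    · ext i j
      fin_cases i <;> fin_cases j <;>
        simp [pauli, Matrix.mul_apply, Fin.sum_univ_two, Matrix.one_apply, Complex.I_mul_I]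

lemma pauli_conj_Z (m : Fin 4) :
    pauli m * pauli 1 * pauli m = (if (m : ℕ) ≤ 1 then (1:ℂ) else -1) • pauli 1 := by
  fin_cases m <;>
    · ext i j
      fin_cases i <;> fin_cases j <;>
        simp [pauli, Matrix.mul_apply, Fin.sum_univ_two, Matrix.one_apply, Complex.I_mul_I]

lemma tensorWord_one {n : ℕ} : tensorWord (fun _ : Fin n => (1 : Matrix (Fin 2) (Fin 2) ℂ)) = 1 := by
  ext a b
  by_cases h : a = b
  · subst h; simp [tensorWord, Matrix.one_apply]
  · obtain ⟨i, hi⟩ := Function.ne_iff.mp h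
    rw [tensorWord, Matrix.of_apply, Finset.prod_eq_zero (Finset.mem_univ i),
      Matrix.one_apply_ne h]
    simp [Matrix.one_apply, hi]

lemma pauliWord_sq {n : ℕ} (j : Fin n → Fin 4) : pauliWord j * pauliWord j = 1 := by
  rw [pauliWord_eq, tensorWord_mul,
    show (fun i => pauli (j i) * pauli (j i)) = fun _ => (1 : Matrix (Fin 2) (Fin 2) ℂ) from
      funext fun i => pauli_mul_self (j i), tensorWord_one]

lemma conj_Zword {n : ℕ} (j : Fin n → Fin 4) (r : Fin n) :
    pauliWord j * Zword r * pauliWord j =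
      (if (j r : ℕ) ≤ 1 then (1:ℂ) else -1) • Zword r := by
  rw [Zword, pauliWord_eq, pauliWord_eq, tensorWord_mul, tensorWord_mul]
  have key : (fun i => pauli (j i) * pauli (if i = r then 1 else 0) * pauli (j i)) =
      fun i => (if i = r then (if (j r : ℕ) ≤ 1 then (1:ℂ) else -1) else 1) •
        pauli (if i = r then 1 else 0) := by
    funext i
    by_cases h : i = r
    · subst h; simp [pauli_conj_Z]
    · have : pauli (0 : Fin 4) = 1 := rfl
      simp [h, this, pauli_mul_self]
  rw [key, tensorWord_smul, Finset.prod_ite_eq' Finset.univ r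
    (fun _ => if (j r : ℕ) ≤ 1 then (1:ℂ) else -1)]
  simp

lemma pauli_low_mul {a b : Fin 4} (ha : (a : ℕ) ≤ 1) (hb : (b : ℕ) ≤ 1) :
    pauli a * pauli b = pauli (if a = b then 0 else 1) := by
  have ha' : a = 0 ∨ a = 1 := by
    rcases Nat.le_one_iff_eq_zero_or_eq_one.mp ha with h | h
    · exact Or.inl (Fin.ext (by simpa using h))
    · exact Or.inr (Fin.ext (by simpa using h))
  have hb' : b = 0 ∨ b = 1 := by
    rcases Nat.le_one_iff_eq_zero_or_eq_one.mp hb with h | h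
    · exact Or.inl (Fin.ext (by simpa using h))
    · exact Or.inr (Fin.ext (by simpa using h))
  rcases ha' with rfl | rfl <;> rcases hb' with rfl | rfl <;>
    simp [show pauli 0 = 1 from rfl, pauli_mul_self]

lemma mem_Z_char {n s : ℕ} (g : Matrix (Fin n → Fin 2) (Fin n → Fin 2) ℂ)
    (hg : g ∈ ZSubgroup n s) :
    ∃ k : Fin n → Fin 4, (∀ i, (k i : ℕ) ≤ 1) ∧ g = pauliWord k := by
  induction hg using Submonoid.closure_induction with
  | mem x hx =>
      obtain ⟨r, _, rfl⟩ := hx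
      exact ⟨_, fun i => by by_cases h : i = r <;> simp [h], rfl⟩
  | one => exact ⟨fun _ => 0, fun i => by simp, pauliWord_zero.symm⟩
  | mul x y _ _ ihx ihy =>
      obtain ⟨k₁, hk₁, rfl⟩ := ihx
      obtain ⟨k₂, hk₂, rfl⟩ := ihy
      refine ⟨fun i => if k₁ i = k₂ i then 0 else 1,
        fun i => by by_cases h : k₁ i = k₂ i <;> simp [h], ?_⟩
      rw [pauliWord_eq, pauliWord_eq, tensorWord_mul,
        show (fun i => pauli (k₁ i) * pauli (k₂ i)) =
            fun i => pauli (if k₁ i = k₂ i then 0 else 1) from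
          funext fun i => pauli_low_mul (hk₁ i) (hk₂ i), pauliWord_eq]

lemma pauli_low_00 {m : Fin 4} (hm : (m : ℕ) ≤ 1) : pauli m 0 0 = 1 := by
  fin_cases m <;> simp_all [pauli, Matrix.one_apply]

lemma pauliWord_low_00 {n : ℕ} {k : Fin n → Fin 4} (hk : ∀ i, (k i : ℕ) ≤ 1) :
    pauliWord k (fun _ => 0) (fun _ => 0) = 1 := by
  rw [pauliWord, Matrix.of_apply]
  exact Finset.prod_eq_one fun i _ => pauli_low_00 (hk i)

lemma coef_ne_zero {c : ℂ} (hc : c ∈ ({1, -1, Complex.I, -Complex.I} : Set ℂ)) : c ≠ 0 := by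
  rcases hc with rfl | rfl | rfl | rfl <;> simp [Complex.I_ne_zero]

lemma smul_inv_eq {n : ℕ} (c : ℂ) (hc : c ≠ 0) (j : Fin n → Fin 4) :
    (c • pauliWord j)⁻¹ = c⁻¹ • pauliWord j :=
  Matrix.inv_eq_right_inv (by
    rw [Matrix.smul_mul, Matrix.mul_smul, smul_smul, pauliWord_sq,
      mul_inv_cancel₀ hc, one_smul])

lemma conj_smul {n : ℕ} (c : ℂ) (hc : c ≠ 0) (j : Fin n → Fin 4)
    (g : Matrix (Fin n → Fin 2) (Fin n → Fin 2) ℂ) :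
    (c • pauliWord j) * g * (c • pauliWord j)⁻¹ = pauliWord j * g * pauliWord j := by
  rw [smul_inv_eq c hc, Matrix.smul_mul, Matrix.smul_mul, Matrix.mul_smul, smul_smul]
  rw [mul_inv_cancel₀ hc, one_smul]

/-- for `G = ⟨Z₁, …, Z_s⟩ ⊆ 𝒫_n`, the normalizer
`N(G) = {h ∈ 𝒫_n : h G h⁻¹ = G}` equals
`{c · σ_{j₁} ⊗ ⋯ ⊗ σ_{jₙ} : j₁, …, j_s ∈ {0,1}, j_{s+1}, …, jₙ ∈ {0,1,2,3}, c ∈ {1,-1,i,-i}}`. -/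
theorem statement8 (n s : ℕ) (hn : 1 ≤ n) (hs : 1 ≤ s) (hsn : s ≤ n) :
    {h ∈ pauliGroupSet n |
        (fun g => h * g * h⁻¹) '' (SetLike.coe (ZSubgroup n s)) = SetLike.coe (ZSubgroup n s)} =
      {A | ∃ c ∈ ({1, -1, Complex.I, -Complex.I} : Set ℂ), ∃ j : Fin n → Fin 4,
        (∀ r : Fin n, (r : ℕ) < s → (j r : ℕ) ≤ 1) ∧ A = c • pauliWord j} := by
  ext A
  simp only [Set.mem_sep_iff, Set.mem_setOf_eq]
  constructor
  · rintro ⟨⟨c, hc, j, rfl⟩, himg⟩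
    refine ⟨c, hc, j, ?_, rfl⟩
    intro r hr
    by_contra hjr
    have hc0 := coef_ne_zero hc
    have hZ : Zword r ∈ ZSubgroup n s := Submonoid.subset_closure ⟨r, hr, rfl⟩
    have hmem : (c • pauliWord j) * Zword r * (c • pauliWord j)⁻¹ ∈
        SetLike.coe (ZSubgroup n s) := by
      rw [← himg]; exact ⟨Zword r, hZ, rfl⟩
    rw [conj_smul c hc0, conj_Zword, if_neg hjr] at hmem
    obtain ⟨k, hk, hEq⟩ := mem_Z_char _ hmem
    have h1 := congrArg (fun M => M (fun _ => 0) (fun _ => 0)) hEq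
    simp only [Matrix.smul_apply] at h1
    rw [pauliWord_low_00 hk, Zword,
      pauliWord_low_00 (k := fun i => if i = r then 1 else 0)
        (fun i => by by_cases h : i = r <;> simp [h])] at h1
    norm_num at h1
  · rintro ⟨c, hc, j, hj, rfl⟩
    have hc0 := coef_ne_zero hc
    refine ⟨⟨c, hc, j, rfl⟩, ?_⟩
    have hfix : ∀ g ∈ ZSubgroup n s, pauliWord j * g * pauliWord j = g := by
      intro g hg
      induction hg using Submonoid.closure_induction with
      | mem x hx =>
          obtain ⟨r, hr, rfl⟩ := hx
          rw [conj_Zword, if_pos (hj r hr), one_smul]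
      | one => rw [mul_one, pauliWord_sq]
      | mul x y hx hy ihx ihy =>
          have hWW := pauliWord_sq j
          calc pauliWord j * (x * y) * pauliWord j
              = (pauliWord j * x * ((pauliWord j * pauliWord j) * y)) * pauliWord j := by
                rw [hWW]; noncomm_ring
            _ = (pauliWord j * x * pauliWord j) * (pauliWord j * y * pauliWord j) := by
                noncomm_ring
            _ = x * y := by rw [ihx, ihy]
    ext x
    constructor
    · rintro ⟨g, hg, rfl⟩
      show (c • pauliWord j) * g * (c • pauliWord j)⁻¹ ∈ _
      rw [conj_smul c hc0, hfix g hg]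
      exact hg
    · intro hx
      refine ⟨x, hx, ?_⟩
      show (c • pauliWord j) * x * (c • pauliWord j)⁻¹ = x
      rw [conj_smul c hc0]
      exact hfix x hx
end

section
/- Let G be an abelian subgroup of the Pauli group 𝒫_n on n qubits with −I₂^{⊗n} ∉ G. Then the normalizer of G in 𝒫_n equals the centralizer of G in 𝒫_n: {h ∈ 𝒫_n : h G h⁻¹ = G} = {h ∈ 𝒫_n : h g = g h for all g ∈ G}. -/
open Matrix

lemma pauli_sq (a : Fin 4) : pauli a * pauli a = 1 := by
  fin_cases a <;>
    · ext i j
      fin_cases i <;> fin_cases j <;>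
        simp [pauli, Matrix.mul_apply, Fin.sum_univ_two, Matrix.one_apply] <;>
        ring_nf <;> simp [Complex.I_sq]

def psign : Fin 4 → Fin 4 → ℂ := fun a b => if a = 0 ∨ b = 0 ∨ a = b then 1 else -1

lemma psign_cases (a b : Fin 4) : psign a b = 1 ∨ psign a b = -1 := by
  unfold psign; split <;> simp

lemma pauli_comm (a b : Fin 4) : pauli a * pauli b = psign a b • (pauli b * pauli a) := by
  fin_cases a <;> fin_cases b <;>
    · ext i j
      fin_cases i <;> fin_cases j <;>
        simp [pauli, psign, Matrix.mul_apply, Fin.sum_univ_two] <;>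
        ring_nf <;> simp [Complex.I_sq] <;> ring

lemma pauliWord_mul {n : ℕ} (j k : Fin n → Fin 4) :
    pauliWord j * pauliWord k
      = Matrix.of fun a b => ∏ i, (pauli (j i) * pauli (k i)) (a i) (b i) := by
  ext a b
  simp only [pauliWord, Matrix.mul_apply, Matrix.of_apply]
  rw [Fintype.prod_sum (f := fun i x => pauli (j i) (a i) x * pauli (k i) x (b i))]
  exact Finset.sum_congr rfl fun c _ => by rw [← Finset.prod_mul_distrib]

lemma pauliWord_comm {n : ℕ} (j k : Fin n → Fin 4) :
    pauliWord j * pauliWord k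
      = (∏ i, psign (j i) (k i)) • (pauliWord k * pauliWord j) := by
  rw [pauliWord_mul, pauliWord_mul]
  ext a b
  simp only [Matrix.of_apply, Matrix.smul_apply, smul_eq_mul]
  calc ∏ i, (pauli (j i) * pauli (k i)) (a i) (b i)
      = ∏ i, psign (j i) (k i) * (pauli (k i) * pauli (j i)) (a i) (b i) := by
        refine Finset.prod_congr rfl fun i _ => ?_
        rw [pauli_comm (j i) (k i)]; simp
    _ = _ := by rw [Finset.prod_mul_distrib]

lemma prod_psign_cases {n : ℕ} (j k : Fin n → Fin 4) :
    (∏ i, psign (j i) (k i)) = 1 ∨ (∏ i, psign (j i) (k i)) = -1 := by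
  refine Finset.prod_induction _ (fun x => x = 1 ∨ x = -1) ?_ (Or.inl rfl)
    (fun i _ => psign_cases (j i) (k i))
  rintro x y (rfl | rfl) (rfl | rfl) <;> norm_num

lemma pauliSet_comm {n : ℕ} {A B : Matrix (Fin n → Fin 2) (Fin n → Fin 2) ℂ}
    (hA : A ∈ pauliGroupSet n) (hB : B ∈ pauliGroupSet n) :
    A * B = B * A ∨ A * B = -(B * A) := by
  obtain ⟨c, _, j, rfl⟩ := hA
  obtain ⟨d, _, k, rfl⟩ := hB
  have key : (c • pauliWord j) * (d • pauliWord k)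
      = (∏ i, psign (j i) (k i)) • ((d • pauliWord k) * (c • pauliWord j)) := by
    rw [smul_mul_assoc, smul_mul_assoc, mul_smul_comm, mul_smul_comm, pauliWord_comm j k]
    simp only [smul_smul]
    ring_nf
  rcases prod_psign_cases j k with hs | hs
  · left; rw [key, hs, one_smul]
  · right; rw [key, hs, neg_smul, one_smul]

lemma pauliSet_isUnit {n : ℕ} {A : Matrix (Fin n → Fin 2) (Fin n → Fin 2) ℂ}
    (hA : A ∈ pauliGroupSet n) : IsUnit A := by
  obtain ⟨c, hc, j, rfl⟩ := hA
  have hc0 : c ≠ 0 := by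
    rcases hc with rfl | rfl | rfl | rfl <;> simp [Complex.I_ne_zero]
  have : (c • pauliWord j) * (c⁻¹ • pauliWord j) = 1 := by
    rw [smul_mul_assoc, mul_smul_comm, smul_smul, mul_inv_cancel₀ hc0, one_smul,
      pauliWord_sq]
  exact ⟨⟨_, _, this, mul_eq_one_comm.mp this⟩, rfl⟩

/-- if `G` is an abelian subgroup of the Pauli group `𝒫_n` with
`−I₂^{⊗n} ∉ G`, then the normalizer of `G` in `𝒫_n` equals the centralizer of `G`
in `𝒫_n`. -/
theorem statement10 (n : ℕ)
    (G : Subgroup (Matrix (Fin n → Fin 2) (Fin n → Fin 2) ℂ)ˣ)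
    (hGpauli : ∀ g ∈ G, (g : Matrix (Fin n → Fin 2) (Fin n → Fin 2) ℂ) ∈ pauliGroupSet n)
    (hGcomm : ∀ g ∈ G, ∀ h ∈ G, g * h = h * g)
    (hneg : (-1 : (Matrix (Fin n → Fin 2) (Fin n → Fin 2) ℂ)ˣ) ∉ G) :
    {h ∈ pauliGroupSet n |
        (fun g => h * g * h⁻¹) '' (Units.val '' (G : Set (Matrix (Fin n → Fin 2) (Fin n → Fin 2) ℂ)ˣ))
          = Units.val '' (G : Set (Matrix (Fin n → Fin 2) (Fin n → Fin 2) ℂ)ˣ)} =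
      {h ∈ pauliGroupSet n |
        ∀ g ∈ G, h * (g : Matrix (Fin n → Fin 2) (Fin n → Fin 2) ℂ) =
          (g : Matrix (Fin n → Fin 2) (Fin n → Fin 2) ℂ) * h} := by
  ext h
  simp only [Set.mem_setOf_eq]
  constructor
  · rintro ⟨hp, himg⟩
    refine ⟨hp, fun g hg => ?_⟩
    have hU : IsUnit h := pauliSet_isUnit hp
    have hinv : h * h⁻¹ = 1 :=
      Matrix.mul_nonsing_inv _ ((Matrix.isUnit_iff_isUnit_det h).mp hU)
    have hmem : h * (g : Matrix (Fin n → Fin 2) (Fin n → Fin 2) ℂ) * h⁻¹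
        ∈ Units.val '' (G : Set (Matrix (Fin n → Fin 2) (Fin n → Fin 2) ℂ)ˣ) := by
      rw [← himg]
      exact ⟨(g : Matrix (Fin n → Fin 2) (Fin n → Fin 2) ℂ), ⟨g, hg, rfl⟩, rfl⟩
    obtain ⟨g', hg', heq⟩ := hmem
    rcases pauliSet_comm hp (hGpauli g hg) with hc | hc
    · exact hc
    · exfalso
      have hval : (g' : Matrix (Fin n → Fin 2) (Fin n → Fin 2) ℂ)
          = -(g : Matrix (Fin n → Fin 2) (Fin n → Fin 2) ℂ) := by
        rw [heq, hc, neg_mul, mul_assoc, hinv, mul_one]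
      have hg'' : g' = -g := Units.ext (by simpa using hval)
      apply hneg
      have hm := G.mul_mem hg' (G.inv_mem hg)
      rw [hg''] at hm
      simpa using hm
  · rintro ⟨hp, hcomm⟩
    refine ⟨hp, ?_⟩
    have hU : IsUnit h := pauliSet_isUnit hp
    have hinv : h * h⁻¹ = 1 :=
      Matrix.mul_nonsing_inv _ ((Matrix.isUnit_iff_isUnit_det h).mp hU)
    have : ∀ x ∈ Units.val '' (G : Set (Matrix (Fin n → Fin 2) (Fin n → Fin 2) ℂ)ˣ),
        h * x * h⁻¹ = x := by
      rintro x ⟨g, hg, rfl⟩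
      rw [hcomm g hg, mul_assoc, hinv, mul_one]
    rw [Set.image_congr this, Set.image_id']
end
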